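/- arXiv:2011.08165 — 9 statements merged into one kernel-verified Lean document; each statement's English description precedes it below -/
import Mathlib

section
/- Let G₁ = (V, E₁) and G₂ = (V, E₂) be simple graphs on the vertex set V = Fin n with E₁ ∩ E₂ = ∅, and let A₁, A₂, and A be the real {0,1}-valued adjacency matrices of G₁, G₂, and the graph G = (V, E₁ ∪ E₂), respectively. If A₁ is constructible in k₁ pulses and A₂ is constructible in k₂ pulses, then A is constructible in k₁ + k₂ pulses. -/
/-! Stack the two pulse matrices and put the two weight matrices in diagonal blocks: then
`PᵀWP = P₁ᵀW₁P₁ + P₂ᵀW₂P₂`, and for edge-disjoint graphs the adjacency matrix of `G₁ ⊔ G₂` is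
the sum of the two adjacency matrices. -/

open Matrix

/-- The intrinsic coupling matrix `J` with `J i j = 1` for `i ≠ j` and `0` on the diagonal. -/
def Jmat (n : ℕ) : Matrix (Fin n) (Fin n) ℝ :=
  fun i j => if i = j then 0 else 1

/-- `A` is constructible in `k` pulses: there are `P ∈ {-1,1}^{k×n}` and a diagonal
`W ∈ ℝ^{k×k}` with `Pᵀ W P ⊙ J = A`. -/
def Constructible (n k : ℕ) (A : Matrix (Fin n) (Fin n) ℝ) : Prop :=
  ∃ (P : Matrix (Fin k) (Fin n) ℝ) (W : Matrix (Fin k) (Fin k) ℝ),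
    (∀ a i, P a i = 1 ∨ P a i = -1) ∧ W.IsDiag ∧
      (Pᵀ * W * P).hadamard (Jmat n) = A

theorem SimpleGraph.adjMatrix_sup_of_disjoint {V R : Type*} [AddZeroClass R] [One R]
    {G₁ G₂ : SimpleGraph V} [DecidableRel G₁.Adj] [DecidableRel G₂.Adj]
    [DecidableRel (G₁ ⊔ G₂).Adj] (hdisj : Disjoint G₁.edgeSet G₂.edgeSet) :
    (G₁ ⊔ G₂).adjMatrix R = G₁.adjMatrix R + G₂.adjMatrix R := by
  ext i j
  by_cases h₁ : G₁.Adj i j <;> by_cases h₂ : G₂.Adj i j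
  · exact (Set.disjoint_left.mp hdisj (G₁.mem_edgeSet.mpr h₁) h₂).elim
  all_goals simp [h₁, h₂]

namespace Matrix

variable {R m m₁ m₂ n : Type*} [Fintype m₁] [Fintype m₂]

theorem transpose_fromRows_mul_fromBlocks_mul_fromRows [Semiring R]
    (P₁ : Matrix m₁ n R) (P₂ : Matrix m₂ n R) (W₁ : Matrix m₁ m₁ R) (W₂ : Matrix m₂ m₂ R) :
    (fromRows P₁ P₂)ᵀ * fromBlocks W₁ 0 0 W₂ * fromRows P₁ P₂ =
      P₁ᵀ * W₁ * P₁ + P₂ᵀ * W₂ * P₂ := by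
  rw [transpose_fromRows, fromCols_mul_fromBlocks, fromCols_mul_fromRows]
  simp only [Matrix.mul_zero, add_zero, zero_add]

theorem transpose_submatrix_mul_submatrix_mul_submatrix [Fintype m] [AddCommMonoid R] [Mul R]
    (P : Matrix m₁ n R) (W : Matrix m₁ m₁ R) (e : m ≃ m₁) :
    (P.submatrix e id)ᵀ * W.submatrix e e * P.submatrix e id = Pᵀ * W * P := by
  rw [transpose_submatrix, submatrix_mul_equiv, submatrix_mul_equiv, submatrix_id_id]

end Matrix

theorem Constructible.add {n k₁ k₂ : ℕ} {A B : Matrix (Fin n) (Fin n) ℝ}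
    (hA : Constructible n k₁ A) (hB : Constructible n k₂ B) :
    Constructible n (k₁ + k₂) (A + B) := by
  obtain ⟨P₁, W₁, hP₁, hW₁, rfl⟩ := hA
  obtain ⟨P₂, W₂, hP₂, hW₂, rfl⟩ := hB
  let e : Fin (k₁ + k₂) ≃ Fin k₁ ⊕ Fin k₂ := finSumFinEquiv.symm
  refine ⟨(fromRows P₁ P₂).submatrix e id, (fromBlocks W₁ 0 0 W₂).submatrix e e, ?_,
    (hW₁.fromBlocks hW₂).submatrix e.injective, ?_⟩
  · suffices ∀ b i, fromRows P₁ P₂ b i = 1 ∨ fromRows P₁ P₂ b i = -1 from fun a => this (e a)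
    rintro (b | b) i
    · exact hP₁ b i
    · exact hP₂ b i
  · rw [transpose_submatrix_mul_submatrix_mul_submatrix,
      transpose_fromRows_mul_fromBlocks_mul_fromRows, add_hadamard]

theorem stmt_1_general (n k₁ k₂ : ℕ)
    (G₁ G₂ : SimpleGraph (Fin n)) [DecidableRel G₁.Adj] [DecidableRel G₂.Adj]
    [DecidableRel (G₁ ⊔ G₂).Adj]
    (hdisj : Disjoint G₁.edgeSet G₂.edgeSet)
    (h₁ : Constructible n k₁ (G₁.adjMatrix ℝ))
    (h₂ : Constructible n k₂ (G₂.adjMatrix ℝ)) :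
    Constructible n (k₁ + k₂) ((G₁ ⊔ G₂).adjMatrix ℝ) := by
  rw [SimpleGraph.adjMatrix_sup_of_disjoint hdisj]
  exact h₁.add h₂

theorem stmt_1 (n k₁ k₂ : ℕ) (hn : 1 ≤ n)
    (G₁ G₂ : SimpleGraph (Fin n)) [DecidableRel G₁.Adj] [DecidableRel G₂.Adj]
    [DecidableRel (G₁ ⊔ G₂).Adj]
    (hdisj : Disjoint G₁.edgeSet G₂.edgeSet)
    (h₁ : Constructible n k₁ (G₁.adjMatrix ℝ))
    (h₂ : Constructible n k₂ (G₂.adjMatrix ℝ)) :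
    Constructible n (k₁ + k₂) ((G₁ ⊔ G₂).adjMatrix ℝ) :=
  stmt_1_general n k₁ k₂ G₁ G₂ hdisj h₁ h₂
end

section
/- Let n, k ≥ 1, let A ∈ ℝ^{n×n} be symmetric with zero diagonal, and suppose P ∈ {-1,1}^{k×n} and a diagonal matrix W ∈ ℝ^{k×k} satisfy PᵀWP ⊙ J = A. If there are two distinct row indices a ≠ b of P such that row a of P equals η times row b of P for some η ∈ {-1,1}, then there exist a matrix P' ∈ {-1,1}^{(k-1)×n} and a diagonal matrix W' ∈ ℝ^{(k-1)×(k-1)} such that P'ᵀW'P' ⊙ J = A; in particular, A is constructible in k − 1 pulses. -/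
open Matrix

lemma quad_apply {k n : ℕ} (P : Matrix (Fin k) (Fin n) ℝ) (d : Fin k → ℝ) (i j : Fin n) :
    (Pᵀ * Matrix.diagonal d * P) i j = ∑ c, d c * P c i * P c j := by
  rw [Matrix.mul_apply]
  simp only [Matrix.mul_diagonal, Matrix.transpose_apply]
  exact Finset.sum_congr rfl fun c _ => by ring

theorem stmt_2 (n k : ℕ) (hn : 1 ≤ n) (hk : 1 ≤ k)
    (A : Matrix (Fin n) (Fin n) ℝ) (hAs : A.IsSymm) (hAd : ∀ i, A i i = 0)
    (P : Matrix (Fin k) (Fin n) ℝ) (hP : ∀ a i, P a i = 1 ∨ P a i = -1)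
    (W : Matrix (Fin k) (Fin k) ℝ) (hW : W.IsDiag)
    (hEq : (Pᵀ * W * P).hadamard (Jmat n) = A)
    (a b : Fin k) (hab : a ≠ b) (η : ℝ) (hη : η = 1 ∨ η = -1)
    (hrow : ∀ i, P a i = η * P b i) :
    Constructible n (k - 1) A := by
  obtain ⟨m, rfl⟩ : ∃ m, k = m + 1 := ⟨k - 1, (Nat.succ_pred_eq_of_pos hk).symm⟩
  have hWd : W = Matrix.diagonal (fun c => W c c) := by
    ext x y
    by_cases h : x = y
    · subst h; simp
    · simp [Matrix.diagonal, h, hW h]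
  set d : Fin (m+1) → ℝ := fun c => W c c with hd
  set P' : Matrix (Fin m) (Fin n) ℝ := fun c i => P (a.succAbove c) i with hP'
  set d' : Fin m → ℝ := fun c => d (a.succAbove c) + if a.succAbove c = b then d a else 0
    with hd'
  refine ⟨P', Matrix.diagonal d', fun c i => hP _ i, Matrix.isDiag_diagonal _, ?_⟩
  have hη2 : η * η = 1 := by rcases hη with h | h <;> simp [h]
  obtain ⟨c₀, hc₀⟩ : ∃ c₀, a.succAbove c₀ = b := Fin.exists_succAbove_eq (Ne.symm hab)
  have key : P'ᵀ * Matrix.diagonal d' * P' = Pᵀ * W * P := by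
    rw [hWd]
    ext i j
    rw [quad_apply, quad_apply]
    rw [Fin.sum_univ_succAbove (fun c => d c * P c i * P c j) a]
    have hab' : P a i * P a j = P b i * P b j := by
      rw [hrow i, hrow j, show η * P b i * (η * P b j) = η * η * (P b i * P b j) by ring, hη2, one_mul]
    have hsplit : ∀ c : Fin m, d' c * P' c i * P' c j =
        d (a.succAbove c) * P (a.succAbove c) i * P (a.succAbove c) j +
        (if c = c₀ then d a * P b i * P b j else 0) := by
      intro c
      by_cases h : c = c₀
      · subst h
        simp [hd', hP', hc₀]
        ring
      · have : a.succAbove c ≠ b := by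
          rw [← hc₀]
          exact fun hh => h (a.succAbove_right_injective hh)
        simp [hd', hP', this, h]
    rw [Finset.sum_congr rfl (fun c _ => hsplit c), Finset.sum_add_distrib,
      Finset.sum_ite_eq' Finset.univ c₀ (fun _ => d a * P b i * P b j)]
    simp only [Finset.mem_univ, if_true]
    linear_combination (-(d a)) * hab'
  rw [key, hEq]
end

section
/- Let n ≥ 1, let V₁, V₂, V₃ be pairwise disjoint subsets of Fin n with V₁ ∪ V₂ ∪ V₃ = Fin n, let μ ∈ ℝ, and let A ∈ ℝ^{n×n} be the matrix with A_{i,j} = μ whenever one of i, j lies in V₁ and the other lies in V₂, and A_{i,j} = 0 otherwise. Then A is constructible in 4 pulses. -/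
open Matrix

theorem stmt_3 (n : ℕ) (hn : 1 ≤ n) (V₁ V₂ V₃ : Set (Fin n))
    (h12 : Disjoint V₁ V₂) (h13 : Disjoint V₁ V₃) (h23 : Disjoint V₂ V₃)
    (hcover : V₁ ∪ V₂ ∪ V₃ = Set.univ)
    (μ : ℝ) (A : Matrix (Fin n) (Fin n) ℝ)
    (hAedge : ∀ i j : Fin n, ((i ∈ V₁ ∧ j ∈ V₂) ∨ (i ∈ V₂ ∧ j ∈ V₁)) → A i j = μ)
    (hAzero : ∀ i j : Fin n, ¬((i ∈ V₁ ∧ j ∈ V₂) ∨ (i ∈ V₂ ∧ j ∈ V₁)) → A i j = 0) :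
    Constructible n 4 A := by
  classical
  set P : Matrix (Fin 4) (Fin n) ℝ := fun a i =>
    if a = 0 then 1 else if a = 1 then (if i ∈ V₂ then -1 else 1)
    else if a = 2 then (if i ∈ V₃ then -1 else 1) else (if i ∈ V₁ then 1 else -1) with hP
  refine ⟨P, Matrix.diagonal ![μ/4, -(μ/4), μ/4, -(μ/4)], ?_, Matrix.isDiag_diagonal _, ?_⟩
  · intro a i
    fin_cases a <;> by_cases h1 : i ∈ V₁ <;> by_cases h2 : i ∈ V₂ <;>
      by_cases h3 : i ∈ V₃ <;> simp [hP, h1, h2, h3]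
  · funext i j
    have hcl : ∀ x : Fin n, x ∈ V₁ ∨ x ∈ V₂ ∨ x ∈ V₃ := by
      intro x
      have hx : x ∈ V₁ ∪ V₂ ∪ V₃ := hcover ▸ Set.mem_univ x
      simpa [Set.mem_union, or_assoc] using hx
    have key : ∀ p q : Fin n, (Pᵀ * Matrix.diagonal ![μ/4, -(μ/4), μ/4, -(μ/4)] * P) p q
        = if (p ∈ V₁ ∧ q ∈ V₂) ∨ (p ∈ V₂ ∧ q ∈ V₁) then μ else 0 := by
      intro p q
      have h12' := Set.disjoint_left.mp h12
      have h13' := Set.disjoint_left.mp h13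
      have h23' := Set.disjoint_left.mp h23
      rw [Matrix.mul_apply]
      simp only [Matrix.mul_apply, Matrix.transpose_apply, Matrix.diagonal_apply,
        Fin.sum_univ_four]
      have h3iff : ∀ x : Fin n, x ∈ V₃ ↔ (x ∉ V₁ ∧ x ∉ V₂) := by
        intro x
        constructor
        · intro hx
          exact ⟨fun h => Set.disjoint_left.mp h13 h hx,
                 fun h => Set.disjoint_left.mp h23 h hx⟩
        · rintro ⟨h1, h2⟩
          rcases hcl x with h | h | h
          · exact absurd h h1
          · exact absurd h h2
          · exact h
      by_cases p1 : p ∈ V₁ <;> by_cases p2 : p ∈ V₂ <;>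
        by_cases q1 : q ∈ V₁ <;> by_cases q2 : q ∈ V₂ <;>
        first
          | exact absurd p2 (h12' p1)
          | exact absurd q2 (h12' q1)
          | (simp [hP, h3iff, p1, p2, q1, q2]; try ring)
    by_cases hij : i = j
    · subst hij
      have hA : A i i = 0 := by
        apply hAzero
        rintro (⟨h1, h2⟩ | ⟨h1, h2⟩)
        · exact Set.disjoint_left.mp h12 h1 h2
        · exact Set.disjoint_left.mp h12 h2 h1
      simp [Matrix.hadamard, Jmat, hA]
    · have hJ : Jmat n i j = 1 := by simp [Jmat, hij]
      rw [Matrix.hadamard_apply, hJ, mul_one, key]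
      split
      · exact (hAedge i j (by assumption)).symm
      · exact (hAzero i j (by assumption)).symm
end

section
/- Let n ≥ 1, let A ∈ ℝ^{n×n} be symmetric with zero diagonal, and let m be the number of unordered pairs {i, j} with i ≠ j and A_{i,j} ≠ 0. Then A is constructible in 3m + 1 pulses. -/
open Matrix

/-- The three pulse vectors used for a single edge `e`: sign flip at `e.1`, at `e.2`,
and at both. -/
def pv (n : ℕ) (e : Fin n × Fin n) (t : Fin 3) (k : Fin n) : ℝ :=
  if t = 0 then (if k = e.1 then -1 else 1)
  else if t = 1 then (if k = e.2 then -1 else 1)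
  else (if k = e.1 ∨ k = e.2 then -1 else 1)

/-- The weights of the three pulses for edge `e`: `-w/4, -w/4, w/4`. -/
noncomputable def wv (n : ℕ) (A : Matrix (Fin n) (Fin n) ℝ) (e : Fin n × Fin n) (t : Fin 3) : ℝ :=
  if t = 2 then A e.1 e.2 / 4 else -(A e.1 e.2 / 4)

lemma pv_pm (n : ℕ) (e : Fin n × Fin n) (t : Fin 3) (k : Fin n) :
    pv n e t k = 1 ∨ pv n e t k = -1 := by
  unfold pv; split_ifs <;> simp

lemma edge_sum (n : ℕ) (A : Matrix (Fin n) (Fin n) ℝ) (e : Fin n × Fin n)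
    (he : e.1 ≠ e.2) (k l : Fin n) (hkl : k ≠ l) :
    A e.1 e.2 / 4 + ∑ t : Fin 3, wv n A e t * pv n e t k * pv n e t l
      = if (k = e.1 ∧ l = e.2) ∨ (k = e.2 ∧ l = e.1) then A e.1 e.2 else 0 := by
  obtain ⟨i, j⟩ := e
  simp only [Fin.sum_univ_three, wv, pv] at *
  norm_num
  by_cases h1 : k = i <;> by_cases h2 : k = j <;> by_cases h3 : l = i <;> by_cases h4 : l = j <;>
    simp_all <;> ring

lemma half_sum (n : ℕ) (A : Matrix (Fin n) (Fin n) ℝ)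
    (S : Finset (Fin n × Fin n))
    (hS : ∀ e, e ∈ S ↔ e.1 < e.2 ∧ A e.1 e.2 ≠ 0)
    (k l : Fin n) (hkl : k < l) :
    ∑ e ∈ S, (if (k = e.1 ∧ l = e.2) ∨ (k = e.2 ∧ l = e.1) then A e.1 e.2 else 0) = A k l := by
  have h1 : ∀ e ∈ S, (if (k = e.1 ∧ l = e.2) ∨ (k = e.2 ∧ l = e.1) then A e.1 e.2 else 0)
      = if e = (k, l) then A e.1 e.2 else 0 := by
    intro e he
    have hlt := ((hS e).1 he).1
    congr 1
    simp only [eq_iff_iff, Prod.ext_iff]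
    constructor
    · rintro (⟨h1, h2⟩ | ⟨h1, h2⟩)
      · exact ⟨h1.symm, h2.symm⟩
      · exfalso; subst h1; subst h2; exact absurd hkl (not_lt.2 hlt.le)
    · rintro ⟨h1, h2⟩; exact Or.inl ⟨h1.symm, h2.symm⟩
  rw [Finset.sum_congr rfl h1, Finset.sum_ite_eq' S (k, l) (fun e => A e.1 e.2)]
  by_cases hmem : (k, l) ∈ S
  · simp [hmem]
  · have : A k l = 0 := by
      by_contra h
      exact hmem ((hS (k, l)).2 ⟨hkl, h⟩)
    simp [hmem, this]

lemma key_sum (n : ℕ) (A : Matrix (Fin n) (Fin n) ℝ) (hAs : A.IsSymm)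
    (S : Finset (Fin n × Fin n))
    (hS : ∀ e, e ∈ S ↔ e.1 < e.2 ∧ A e.1 e.2 ≠ 0)
    (k l : Fin n) (hkl : k ≠ l) :
    ∑ e ∈ S, (A e.1 e.2 / 4 + ∑ t : Fin 3, wv n A e t * pv n e t k * pv n e t l) = A k l := by
  have h1 : ∀ e ∈ S, (A e.1 e.2 / 4 + ∑ t : Fin 3, wv n A e t * pv n e t k * pv n e t l)
      = if (k = e.1 ∧ l = e.2) ∨ (k = e.2 ∧ l = e.1) then A e.1 e.2 else 0 := by
    intro e he
    exact edge_sum n A e (ne_of_lt ((hS e).1 he).1) k l hkl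
  rw [Finset.sum_congr rfl h1]
  rcases lt_or_gt_of_ne hkl with h | h
  · exact half_sum n A S hS k l h
  · have := half_sum n A S hS l k h
    rw [← hAs.apply k l]
    rw [← this]
    apply Finset.sum_congr rfl
    intro e _
    congr 1
    simp only [eq_iff_iff]
    tauto

theorem stmt_4 (n : ℕ) (hn : 1 ≤ n) (A : Matrix (Fin n) (Fin n) ℝ)
    (hAs : A.IsSymm) (hAd : ∀ i, A i i = 0)
    (m : ℕ)
    (hm : m = (Finset.univ.filter fun p : Fin n × Fin n => p.1 < p.2 ∧ A p.1 p.2 ≠ 0).card) :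
    Constructible n (3 * m + 1) A := by
  classical
  set S := (Finset.univ.filter fun p : Fin n × Fin n => p.1 < p.2 ∧ A p.1 p.2 ≠ 0) with hSdef
  have hS : ∀ e, e ∈ S ↔ e.1 < e.2 ∧ A e.1 e.2 ≠ 0 := by
    intro e; simp [hSdef]
  have hcard : Fintype.card (Unit ⊕ (↥S × Fin 3)) = 3 * m + 1 := by
    simp [Fintype.card_sum, Fintype.card_prod, Fintype.card_coe, hm]
    ring
  let eqv : Fin (3 * m + 1) ≃ (Unit ⊕ (↥S × Fin 3)) := (Fintype.equivFinOfCardEq hcard).symm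
  let p : (Unit ⊕ (↥S × Fin 3)) → Fin n → ℝ :=
    Sum.elim (fun _ _ => 1) (fun x k => pv n x.1.val x.2 k)
  let w : (Unit ⊕ (↥S × Fin 3)) → ℝ :=
    Sum.elim (fun _ => ∑ e ∈ S, A e.1 e.2 / 4) (fun x => wv n A x.1.val x.2)
  let P : Matrix (Fin (3 * m + 1)) (Fin n) ℝ := fun a k => p (eqv a) k
  refine ⟨P, Matrix.diagonal (fun a => w (eqv a)),
    ?_, Matrix.isDiag_diagonal _, ?_⟩
  · intro a i
    show p (eqv a) i = 1 ∨ p (eqv a) i = -1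
    rcases h : eqv a with u | x
    · left; simp [p]
    · simpa [p] using pv_pm n x.1.val x.2 i
  · ext k l
    rw [Matrix.hadamard_apply]
    by_cases hkl : k = l
    · subst hkl; simp [Jmat, hAd]
    · simp only [Jmat, if_neg hkl, mul_one]
      have hentry : (Pᵀ * Matrix.diagonal (fun a => w (eqv a)) * P) k l
          = ∑ a : Fin (3*m+1), w (eqv a) * p (eqv a) k * p (eqv a) l := by
        rw [Matrix.mul_apply]
        simp only [Matrix.mul_diagonal, Matrix.transpose_apply]
        apply Finset.sum_congr rfl
        intro a _
        ring
      rw [hentry, Equiv.sum_comp eqv (fun b => w b * p b k * p b l)]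
      rw [Fintype.sum_sum_type]
      simp only [Fintype.sum_prod_type]
      have hunit : ∑ u : Unit, w (Sum.inl u) * p (Sum.inl u) k * p (Sum.inl u) l
          = ∑ e ∈ S, A e.1 e.2 / 4 := by simp [w, p]
      rw [hunit]
      have hattach : ∑ e : ↥S, ∑ t : Fin 3, w (Sum.inr (e, t)) * p (Sum.inr (e, t)) k *
          p (Sum.inr (e, t)) l = ∑ e ∈ S, ∑ t : Fin 3, wv n A e t * pv n e t k * pv n e t l := by
        rw [← Finset.sum_coe_sort S (fun e => ∑ t : Fin 3, wv n A e t * pv n e t k * pv n e t l)]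
        simp [w, p]
      rw [hattach, ← Finset.sum_add_distrib]
      exact key_sum n A hAs S hS k l hkl
end

section
/- Let n ≥ 1 and let A ∈ ℝ^{n×n} be a symmetric matrix with zero diagonal all of whose entries lie in {0, 1}. Then A is constructible in 3n − 2 pulses. -/
open Matrix

/-- pulse vector `p_a` -/
def ppul {n : ℕ} (A : Matrix (Fin n) (Fin n) ℝ) (a : ℕ) (i : Fin n) : ℝ :=
  if h : a < (i : ℕ) then 2 * A ⟨a, h.trans i.isLt⟩ i - 1 else 1

/-- pulse vector `q_a` (flip entry `a`) -/
def qpul {n : ℕ} (A : Matrix (Fin n) (Fin n) ℝ) (a : ℕ) (i : Fin n) : ℝ :=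
  if (i : ℕ) = a then -1 else ppul A a i

def Pfun {n : ℕ} (A : Matrix (Fin n) (Fin n) ℝ) (a : ℕ) (i : Fin n) : ℝ :=
  if a < n then ppul A a i else if a < n + n then qpul A (a - n) i else 1

noncomputable def wfun (n a : ℕ) : ℝ :=
  if a < n then 4⁻¹ else if a < n + n then -4⁻¹ else 0

lemma ppul_pm {n : ℕ} (A : Matrix (Fin n) (Fin n) ℝ)
    (h01 : ∀ i j : Fin n, A i j = 0 ∨ A i j = 1) (a : ℕ) (i : Fin n) :
    ppul A a i = 1 ∨ ppul A a i = -1 := by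
  unfold ppul
  split
  · rcases h01 _ i with h | h <;> rw [h] <;> norm_num
  · left; rfl

lemma sum_key {n : ℕ} (A : Matrix (Fin n) (Fin n) ℝ) (hAs : A.IsSymm)
    {i j : Fin n} (hij : i ≠ j) {k : ℕ} (hk : n + n ≤ k) :
    ∑ a : Fin k, Pfun A a i * wfun n a * Pfun A a j = A i j := by
  rw [Fin.sum_univ_eq_sum_range (fun a => Pfun A a i * wfun n a * Pfun A a j) k]
  have hzero : ∀ a ∈ Finset.range k, a ∉ Finset.range (n + n) →
      Pfun A a i * wfun n a * Pfun A a j = 0 := by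
    intro a _ ha
    simp only [Finset.mem_range, not_lt] at ha
    have h1 : ¬ a < n := by omega
    have h2 : ¬ a < n + n := by omega
    simp [wfun, h1, h2]
  rw [← Finset.sum_subset (Finset.range_subset_range.mpr hk) hzero]
  rw [Finset.sum_range_add]
  have hp : ∀ a ∈ Finset.range n,
      Pfun A a i * wfun n a * Pfun A a j = 4⁻¹ * (ppul A a i * ppul A a j) := by
    intro a ha
    simp only [Finset.mem_range] at ha
    simp [Pfun, wfun, ha]; ring
  have hq : ∀ a ∈ Finset.range n,
      Pfun A (n + a) i * wfun n (n + a) * Pfun A (n + a) j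
        = -4⁻¹ * (qpul A a i * qpul A a j) := by
    intro a ha
    simp only [Finset.mem_range] at ha
    have h1 : ¬ n + a < n := by omega
    have h2 : n + a < n + n := by omega
    simp [Pfun, wfun, h1, h2]; ring
  rw [Finset.sum_congr rfl hp, Finset.sum_congr rfl hq]
  rw [← Finset.mul_sum, ← Finset.mul_sum]
  -- compute both sums by isolating the two special indices
  have key : ∀ (f : ℕ → ℝ), (∀ a ∈ Finset.range n, a ≠ (i : ℕ) → a ≠ (j : ℕ) → f a = 0) →
      ∑ a ∈ Finset.range n, f a = f i + f j := by
    intro f hf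
    exact Finset.sum_eq_add_of_mem _ _ (Finset.mem_range.mpr i.isLt)
      (Finset.mem_range.mpr j.isLt) (fun h => hij (Fin.val_injective h))
      (fun c hc h => hf c hc h.1 h.2)
  have hppq : ∀ a ∈ Finset.range n, a ≠ (i : ℕ) → a ≠ (j : ℕ) →
      ppul A a i * ppul A a j - qpul A a i * qpul A a j = 0 := by
    intro a _ hi hj
    have : qpul A a i = ppul A a i := by simp [qpul, Ne.symm hi]
    have h2 : qpul A a j = ppul A a j := by simp [qpul, Ne.symm hj]
    rw [this, h2]; ring
  have hdiff : ∑ a ∈ Finset.range n, (ppul A a i * ppul A a j - qpul A a i * qpul A a j)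
      = 2 * ppul A i j + 2 * ppul A j i := by
    rw [key _ hppq]
    have hpii : ppul A (i : ℕ) i = 1 := by simp [ppul]
    have hpjj : ppul A (j : ℕ) j = 1 := by simp [ppul]
    have hqii : qpul A (i : ℕ) i = -1 := by simp [qpul]
    have hqjj : qpul A (j : ℕ) j = -1 := by simp [qpul]
    have hvij : ¬ ((j : ℕ) = (i : ℕ)) := fun h => hij (Fin.val_injective h).symm
    have hvji : ¬ ((i : ℕ) = (j : ℕ)) := fun h => hij (Fin.val_injective h)
    have hqij : qpul A (i : ℕ) j = ppul A (i : ℕ) j := by simp [qpul, hvij]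
    have hqji : qpul A (j : ℕ) i = ppul A (j : ℕ) i := by simp [qpul, hvji]
    rw [hpii, hpjj, hqii, hqjj, hqij, hqji]; ring
  have : (4:ℝ)⁻¹ * ∑ a ∈ Finset.range n, ppul A a i * ppul A a j
      + (-4⁻¹) * ∑ a ∈ Finset.range n, qpul A a i * qpul A a j
      = 4⁻¹ * (2 * ppul A i j + 2 * ppul A j i) := by
    rw [← hdiff, Finset.sum_sub_distrib]; ring
  rw [this]
  -- finally compute ppul values
  rcases lt_or_gt_of_ne (fun h : (i:ℕ) = (j:ℕ) => hij (Fin.val_injective h)) with h | h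
  · have h1 : ppul A (i : ℕ) j = 2 * A i j - 1 := by
      simp only [ppul, dif_pos h]
    have h2 : ppul A (j : ℕ) i = 1 := by
      simp [ppul, not_lt.mpr (le_of_lt h)]
    rw [h1, h2]; ring
  · have h1 : ppul A (j : ℕ) i = 2 * A j i - 1 := by
      simp only [ppul, dif_pos h]
    have h2 : ppul A (i : ℕ) j = 1 := by
      simp [ppul, not_lt.mpr (le_of_lt h)]
    rw [h1, h2, hAs.apply i j]; ring

theorem stmt_6 (n : ℕ) (hn : 1 ≤ n) (A : Matrix (Fin n) (Fin n) ℝ)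
    (hAs : A.IsSymm) (hAd : ∀ i, A i i = 0)
    (h01 : ∀ i j : Fin n, A i j = 0 ∨ A i j = 1) :
    Constructible n (3 * n - 2) A := by
  rcases eq_or_lt_of_le hn with h1 | h2
  · -- n = 1 : trivial, J is zero
    refine ⟨fun _ _ => 1, 0, fun _ _ => Or.inl rfl, Matrix.isDiag_zero, ?_⟩
    funext i j
    have : i = j := by omega
    subst this
    simp [Matrix.hadamard_apply, Jmat, hAd]
  · have hn2 : 2 ≤ n := h2
    have hk : n + n ≤ 3 * n - 2 := by omega
    refine ⟨Matrix.of fun a i => Pfun A (a : ℕ) i,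
      Matrix.diagonal fun a : Fin (3 * n - 2) => wfun n (a : ℕ),
      ?_, Matrix.isDiag_diagonal _, ?_⟩
    · intro a i
      simp only [Matrix.of_apply]
      unfold Pfun
      split
      · exact ppul_pm A h01 _ i
      · split
        · unfold qpul
          split
          · right; rfl
          · exact ppul_pm A h01 _ i
        · left; rfl
    · funext i j
      have hM : (((Matrix.of fun (a : Fin (3*n-2)) i => Pfun A (a : ℕ) i)ᵀ
          * Matrix.diagonal (fun a : Fin (3*n-2) => wfun n (a : ℕ))
          * Matrix.of fun (a : Fin (3*n-2)) i => Pfun A (a : ℕ) i)) i j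
          = ∑ a : Fin (3*n-2), Pfun A (a : ℕ) i * wfun n (a : ℕ) * Pfun A (a : ℕ) j := by
        rw [Matrix.mul_assoc]
        simp only [Matrix.mul_apply, Matrix.diagonal_apply, Matrix.transpose_apply,
          Matrix.of_apply, ite_mul, zero_mul, Finset.sum_ite_eq, Finset.mem_univ, if_true]
        exact Finset.sum_congr rfl fun _ _ => by ring
      by_cases hij : i = j
      · subst hij
        simp [Matrix.hadamard_apply, Jmat, hAd]
      · rw [Matrix.hadamard_apply, hM, Jmat, if_neg hij, mul_one,
          sum_key A hAs hij hk]
end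

section
/- Let n ≥ 1 and let A ∈ ℝ^{n×n} be a symmetric {0,1}-valued matrix with zero diagonal, the adjacency matrix of a simple graph G on Fin n. Suppose the edge set of G is the disjoint union of t sets B₁, …, B_t, where for each p there are disjoint vertex sets X_p, Y_p ⊆ Fin n such that B_p consists exactly of all pairs {x, y} with x ∈ X_p and y ∈ Y_p (i.e., each B_p is the edge set of a complete bipartite graph). Then A is constructible in 3t + 1 pulses. -/
open Matrix

/-!
For disjoint `X, Y` with indicator vectors `x, y`, the `±1` vectors `u = 1 - 2x`, `v = 1 - 2y`
and `w = 1 - 2(x + y)` satisfy `(wᵢwⱼ - uᵢuⱼ - vᵢvⱼ + 1) / 4 = xᵢyⱼ + xⱼyᵢ`, the adjacency matrix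
of the biclique `X × Y`. So each biclique of the partition costs three pulses, and the `t`
constants `1/4` are collected into a single all-ones pulse of weight `t/4`.
-/

open Finset Function

theorem constructible_of_offDiag_eq_sum {n : ℕ} {ι : Type*} [Fintype ι]
    (P : ι → Fin n → ℝ) (w : ι → ℝ) (hP : ∀ a i, P a i = 1 ∨ P a i = -1)
    (A : Matrix (Fin n) (Fin n) ℝ) (hdiag : ∀ i, A i i = 0)
    (hA : ∀ i j, i ≠ j → A i j = ∑ a, w a * P a i * P a j) :
    Constructible n (Fintype.card ι) A := by
  let e := Fintype.equivFin ι
  refine ⟨.of fun k i => P (e.symm k) i, .diagonal (w ∘ e.symm), fun k i => hP _ i,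
    isDiag_diagonal _, ?_⟩
  ext i j
  rcases eq_or_ne i j with rfl | hij
  · simp [Jmat, hdiag]
  · rw [hadamard_apply, mul_apply, hA i j hij, ← e.symm.sum_comp]
    simp only [Jmat, if_neg hij, mul_one, mul_diagonal, transpose_apply, of_apply,
      Function.comp_apply]
    exact sum_congr rfl fun _ _ => by ring

theorem SimpleGraph.adjMatrix_apply_eq_sum_indicator {V ι R : Type*} [Fintype ι]
    [AddCommMonoidWithOne R] (G : SimpleGraph V) [DecidableRel G.Adj] (B : ι → Set (Sym2 V))
    (hdisj : Pairwise (Disjoint on B)) (hcover : G.edgeSet = ⋃ p, B p) (i j : V) :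
    G.adjMatrix R i j = ∑ p, (B p).indicator 1 s(i, j) := by
  rw [← indicator_biUnion_apply _ _ (hdisj.set_pairwise _)]
  simp only [mem_univ, Set.iUnion_true, ← hcover, adjMatrix_apply]
  simp [Set.indicator_apply]

def bicliqueEdges {α : Type*} (X Y : Set α) : Set (Sym2 α) :=
  {e | ∃ x ∈ X, ∃ y ∈ Y, e = s(x, y)}

theorem indicator_bicliqueEdges_mk {α R : Type*} [NonAssocSemiring R] {X Y : Set α}
    (h : Disjoint X Y) (i j : α) :
    (bicliqueEdges X Y).indicator (1 : Sym2 α → R) s(i, j) =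
      X.indicator 1 i * Y.indicator 1 j + X.indicator 1 j * Y.indicator 1 i := by
  classical
  have hmem : s(i, j) ∈ bicliqueEdges X Y ↔ i ∈ X ∧ j ∈ Y ∨ j ∈ X ∧ i ∈ Y := by
    simp only [bicliqueEdges, Set.mem_ofPred_eq, Sym2.eq_iff]
    aesop
  have hi : i ∈ X → i ∉ Y := fun hx => Set.disjoint_left.mp h hx
  have hj : j ∈ X → j ∉ Y := fun hx => Set.disjoint_left.mp h hx
  simp only [Set.indicator_apply, hmem, Pi.one_apply]
  split_ifs <;> simp_all

open Classical in
noncomputable def signVec {α : Type*} (S : Set α) (i : α) : ℝ := if i ∈ S then -1 else 1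

theorem signVec_eq_one_or_neg_one {α : Type*} (S : Set α) (i : α) :
    signVec S i = 1 ∨ signVec S i = -1 := by
  unfold signVec
  split_ifs <;> simp

theorem signVec_eq_one_sub_two_mul_indicator {α : Type*} (S : Set α) (i : α) :
    signVec S i = 1 - 2 * S.indicator 1 i := by
  unfold signVec
  split_ifs with h <;> norm_num [h]

theorem biclique_signVec_identity {α : Type*} {X Y : Set α} (h : Disjoint X Y) (i j : α) :
    (signVec (X ∪ Y) i * signVec (X ∪ Y) j - signVec X i * signVec X j
      - signVec Y i * signVec Y j + 1) / 4 =
      X.indicator 1 i * Y.indicator 1 j + X.indicator 1 j * Y.indicator 1 i := by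
  simp only [signVec_eq_one_sub_two_mul_indicator, Set.indicator_union_of_disjoint h]
  ring

noncomputable def bicliquePulse {α : Type*} {t : ℕ} (X Y : Fin t → Set α) :
    Option (Fin t × Fin 3) → α → ℝ
  | none => 1
  | some (p, r) => signVec (![X p ∪ Y p, X p, Y p] r)

noncomputable def bicliqueWeight (t : ℕ) : Option (Fin t × Fin 3) → ℝ
  | none => t / 4
  | some (_, r) => ![1, -1, -1] r / 4

theorem bicliquePulse_eq_one_or_neg_one {α : Type*} {t : ℕ} (X Y : Fin t → Set α) :
    ∀ a i, bicliquePulse X Y a i = 1 ∨ bicliquePulse X Y a i = -1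
  | none, _ => .inl rfl
  | some _, _ => signVec_eq_one_or_neg_one _ _

theorem sum_bicliqueWeight_mul_bicliquePulse {α : Type*} {t : ℕ} {X Y : Fin t → Set α}
    (hXY : ∀ p, Disjoint (X p) (Y p)) (i j : α) :
    ∑ a, bicliqueWeight t a * bicliquePulse X Y a i * bicliquePulse X Y a j =
      ∑ p, (bicliqueEdges (X p) (Y p)).indicator 1 s(i, j) := by
  have hconst : (t : ℝ) / 4 = ∑ _p : Fin t, 1 / 4 := by simp [div_eq_mul_inv]
  simp only [indicator_bicliqueEdges_mk (hXY _), ← biclique_signVec_identity (hXY _)]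
  rw [Fintype.sum_option, Fintype.sum_prod_type]
  simp only [Fin.sum_univ_three, bicliqueWeight, bicliquePulse, Pi.one_apply, mul_one,
    Matrix.cons_val_zero, Matrix.cons_val_one, Matrix.cons_val_two, Matrix.head_cons,
    Matrix.tail_cons]
  rw [hconst, ← sum_add_distrib]
  exact sum_congr rfl fun _ _ => by ring

theorem stmt_7_general (n t : ℕ) (G : SimpleGraph (Fin n)) [DecidableRel G.Adj]
    (B : Fin t → Set (Sym2 (Fin n)))
    (X Y : Fin t → Set (Fin n))
    (hXY : ∀ p, Disjoint (X p) (Y p))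
    (hB : ∀ p, B p = {e | ∃ x ∈ X p, ∃ y ∈ Y p, e = s(x, y)})
    (hdisj : ∀ p q : Fin t, p ≠ q → Disjoint (B p) (B q))
    (hcover : G.edgeSet = ⋃ p, B p) :
    Constructible n (3 * t + 1) (G.adjMatrix ℝ) := by
  have hcard : Fintype.card (Option (Fin t × Fin 3)) = 3 * t + 1 := by simp [mul_comm]
  rw [← hcard]
  refine constructible_of_offDiag_eq_sum (bicliquePulse X Y) (bicliqueWeight t)
    (bicliquePulse_eq_one_or_neg_one X Y) _ (fun i => by simp) fun i j _ => ?_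
  rw [G.adjMatrix_apply_eq_sum_indicator B hdisj hcover, sum_bicliqueWeight_mul_bicliquePulse hXY]
  simp only [hB, bicliqueEdges]

theorem stmt_7 (n t : ℕ) (hn : 1 ≤ n) (G : SimpleGraph (Fin n)) [DecidableRel G.Adj]
    (B : Fin t → Set (Sym2 (Fin n)))
    (X Y : Fin t → Set (Fin n))
    (hXY : ∀ p, Disjoint (X p) (Y p))
    (hB : ∀ p, B p = {e | ∃ x ∈ X p, ∃ y ∈ Y p, e = s(x, y)})
    (hdisj : ∀ p q : Fin t, p ≠ q → Disjoint (B p) (B q))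
    (hcover : G.edgeSet = ⋃ p, B p) :
    Constructible n (3 * t + 1) (G.adjMatrix ℝ) :=
  stmt_7_general n t G B X Y hXY hB hdisj hcover
end

section
/- Let n ≥ 2 and let A ∈ ℝ^{n×n} be a symmetric matrix with zero diagonal whose strictly upper-triangular entries A_{i,j} (i < j) are pairwise distinct. If A is constructible in k pulses, then n(n−1)/2 ≤ 2^k + 1; in particular, k ≥ log₂(n(n−1)/2 − 1) whenever n(n−1)/2 > 2. -/
open Matrix Finset

lemma card_lt_pairs (n : ℕ) :
    ((Finset.univ : Finset (Fin n × Fin n)).filter fun p => p.1 < p.2).card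
      = n * (n - 1) / 2 := by
  rw [Finset.card_eq_sum_card_fiberwise
    (f := fun p : Fin n × Fin n => p.2) (t := Finset.univ) (fun _ _ => Finset.mem_univ _)]
  have : ∀ j : Fin n,
      ((Finset.univ.filter fun p : Fin n × Fin n => p.1 < p.2).filter
        fun p => p.2 = j).card = (j : ℕ) := by
    intro j
    rw [← Fin.card_Iio (b := j)]
    apply Finset.card_bij (fun p _ => p.1)
    · intro p hp
      simp only [Finset.mem_filter, Finset.mem_univ, true_and] at hp
      simp [Finset.mem_Iio, hp.2 ▸ hp.1]
    · intro p hp q hq hpq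
      simp only [Finset.mem_filter, Finset.mem_univ, true_and] at hp hq
      exact Prod.ext hpq (hp.2.trans hq.2.symm)
    · intro i hi
      exact ⟨(i, j), by simpa using Finset.mem_Iio.mp hi, rfl⟩
  simp_rw [this]
  rw [Fin.sum_univ_eq_sum_range (fun i => i), Finset.sum_range_id]

theorem stmt_9 (n k : ℕ) (hn : 2 ≤ n)
    (A : Matrix (Fin n) (Fin n) ℝ) (hAs : A.IsSymm) (hAd : ∀ i, A i i = 0)
    (hdist : ∀ i j i' j' : Fin n, i < j → i' < j' → (i, j) ≠ (i', j') → A i j ≠ A i' j')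
    (h : Constructible n k A) :
    n * (n - 1) / 2 ≤ 2 ^ k + 1 ∧
    (2 < n * (n - 1) / 2 →
      Real.logb 2 ((n * (n - 1) / 2 : ℕ) - 1 : ℝ) ≤ (k : ℝ)) := by
  obtain ⟨P, W, hP, hW, hA⟩ := h
  -- entry formula
  have hentry : ∀ i j : Fin n, i ≠ j →
      A i j = ∑ b : Fin k, P b i * W b b * P b j := by
    intro i j hij
    have h1 := congrFun (congrFun hA i) j
    rw [Matrix.hadamard_apply, Jmat, if_neg hij, mul_one] at h1
    rw [← h1, Matrix.mul_apply]
    refine Finset.sum_congr rfl fun b _ => ?_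
    rw [Matrix.mul_apply]
    rw [Finset.sum_eq_single b (fun a _ hab => by
      rw [hW hab, mul_zero]) (by simp)]
    rfl
  -- product formula
  have hprod : ∀ (a : Fin k) (i j : Fin n),
      P a i * P a j = if P a i = P a j then 1 else -1 := by
    intro a i j
    rcases hP a i with h1 | h1 <;> rcases hP a j with h2 | h2 <;>
      rw [h1, h2] <;> norm_num
  -- injectivity
  set S := (Finset.univ : Finset (Fin n × Fin n)).filter fun p => p.1 < p.2 with hS
  have hcard : S.card ≤ 2 ^ k := by
    have := Finset.card_le_card_of_injOn
      (f := fun p : Fin n × Fin n => fun a : Fin k => decide (P a p.1 = P a p.2))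
      (s := S) (t := (Finset.univ : Finset (Fin k → Bool)))
      (fun _ _ => Finset.mem_univ _) ?_
    · simpa using this
    · intro p hp q hq hpq
      simp only [hS, Finset.mem_coe, Finset.mem_filter, Finset.mem_univ, true_and] at hp hq
      by_contra hne
      apply hdist p.1 p.2 q.1 q.2 hp hq (by simpa using hne)
      rw [hentry p.1 p.2 (ne_of_lt hp), hentry q.1 q.2 (ne_of_lt hq)]
      refine Finset.sum_congr rfl fun a _ => ?_
      have ha := congrFun hpq a
      simp only [decide_eq_decide] at ha
      rw [mul_comm (P a p.1) (W a a), mul_assoc, mul_comm (P a q.1) (W a a), mul_assoc]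
      congr 1
      rw [hprod, hprod]
      by_cases hc : P a p.1 = P a p.2
      · rw [if_pos hc, if_pos (ha.mp hc)]
      · rw [if_neg hc, if_neg (fun hh => hc (ha.mpr hh))]
  have hmain : n * (n - 1) / 2 ≤ 2 ^ k := by
    rw [← card_lt_pairs n]; exact hcard
  refine ⟨hmain.trans (Nat.le_succ _), fun hm => ?_⟩
  have h1 : ((n * (n - 1) / 2 : ℕ) - 1 : ℝ) ≤ (2 : ℝ) ^ k := by
    have : ((n * (n - 1) / 2 : ℕ) : ℝ) ≤ ((2 ^ k : ℕ) : ℝ) := by exact_mod_cast hmain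
    push_cast at this ⊢
    linarith
  have h2 : (0 : ℝ) < ((n * (n - 1) / 2 : ℕ) - 1 : ℝ) := by
    have : (3 : ℕ) ≤ n * (n - 1) / 2 := hm
    have : (3 : ℝ) ≤ ((n * (n - 1) / 2 : ℕ) : ℝ) := by exact_mod_cast this
    linarith
  calc Real.logb 2 ((n * (n - 1) / 2 : ℕ) - 1 : ℝ)
      ≤ Real.logb 2 ((2 : ℝ) ^ k) := Real.logb_le_logb_of_le (by norm_num) h2 h1
    _ = k := by
        rw [← Real.rpow_natCast 2 k, Real.logb_rpow (by norm_num) (by norm_num)]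
end

section
/- Let n ≥ 1 and let A ∈ ℝ^{n×n} be symmetric with zero diagonal, and set Z = Σ_{i<j} |A_{i,j}|. Suppose P ∈ {-1,1}^{k×n} and a diagonal matrix W ∈ ℝ^{k×k} satisfy PᵀWP ⊙ J = A, let r be the number of nonzero diagonal entries of W, and assume r > 1 and that W is L0-optimal: for every k' ≥ 1, every P' ∈ {-1,1}^{k'×n} and diagonal W' ∈ ℝ^{k'×k'} with P'ᵀW'P' ⊙ J = A, the number of nonzero diagonal entries of W' is at least r. Then every diagonal entry of W satisfies |W_{a,a}| ≤ Z · (r − 1)^{(r+1)/2}. -/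
open Matrix

/-!
If `W` is L0-optimal, the coupling vectors `(P a i * P a j)_{i<j}` of the pulses `a` with
`W a a ≠ 0` are linearly independent: a linear dependency among them could be used to shift `W`
so that one more weight vanishes without changing `Pᵀ W P ⊙ J`. Hence some `r` distinct pairs
`i < j` give an invertible `r × r` system `M w = b` with entries of `M` in `{-1, 1}`, where `w` is
the vector of nonzero weights and `b` lists entries of `A`, so `∑ |b| ≤ Z`. By Cramer's rule,
`|w a| ≤ |det M| |w a|` is the determinant of `M` with a column replaced by `b` (`M` is integral,
so `|det M| ≥ 1`); expanding along that column and bounding the `(r - 1)`-minors by Hadamard's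
inequality gives `|w a| ≤ Z (r - 1) ^ ((r - 1) / 2)`.
-/

open Finset

theorem Matrix.abs_det_le_prod_norm_rows {m : ℕ} (N : Matrix (Fin m) (Fin m) ℝ) :
    |N.det| ≤ ∏ i, ‖WithLp.toLp 2 (N i)‖ := by
  let b := EuclideanSpace.basisFun (Fin m) ℝ
  have : Fact (Module.finrank ℝ (EuclideanSpace ℝ (Fin m)) = m) := ⟨finrank_euclideanSpace_fin⟩
  have := b.toBasis.orientation.abs_volumeForm_apply_le fun i => WithLp.toLp 2 (N i)
  rw [b.toBasis.orientation.volumeForm_robust' b] at this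
  convert this using 2
  rw [Module.Basis.det_apply, ← det_transpose]
  congr 1

theorem Matrix.abs_det_le_of_abs_le_one {m : ℕ} (N : Matrix (Fin m) (Fin m) ℝ)
    (hN : ∀ i j, |N i j| ≤ 1) : |N.det| ≤ (m : ℝ) ^ ((m : ℝ) / 2) := by
  have hrow : ∀ i, ‖WithLp.toLp 2 (N i)‖ ≤ √m := fun i => by
    rw [EuclideanSpace.norm_eq]
    gcongr
    calc ∑ j, ‖N i j‖ ^ 2 ≤ ∑ _j : Fin m, (1 : ℝ) :=
          sum_le_sum fun j _ => by simpa [sq_le_one_iff_abs_le_one] using hN i j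
      _ = m := by simp
  calc |N.det| ≤ ∏ i, ‖WithLp.toLp 2 (N i)‖ := N.abs_det_le_prod_norm_rows
    _ ≤ ∏ _i : Fin m, √m := prod_le_prod (fun _ _ => norm_nonneg _) fun i _ => hrow i
    _ = (m : ℝ) ^ ((m : ℝ) / 2) := by
      rw [prod_const, card_univ, Fintype.card_fin, Real.sqrt_eq_rpow, ← Real.rpow_natCast,
        ← Real.rpow_mul (Nat.cast_nonneg m)]
      ring_nf

theorem Matrix.one_le_abs_det_of_intCast {ι : Type*} [Fintype ι] [DecidableEq ι]
    (N : Matrix ι ι ℝ) (hN : ∀ i j, ∃ z : ℤ, N i j = z) (hunit : IsUnit N) : 1 ≤ |N.det| := by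
  choose Nz hNz using hN
  have hcast : N.det = (Matrix.of Nz).det := by
    rw [Int.cast_det]
    congr 1
    ext i j
    exact hNz i j
  have hNz0 : (Matrix.of Nz).det ≠ 0 := by
    rintro h0
    rw [h0, Int.cast_zero] at hcast
    exact ((isUnit_iff_isUnit_det N).mp hunit).ne_zero hcast
  rw [hcast, ← Int.cast_abs]
  exact_mod_cast Int.one_le_abs hNz0

theorem Matrix.abs_det_updateCol_le {m : ℕ} (N : Matrix (Fin (m + 1)) (Fin (m + 1)) ℝ)
    (hN : ∀ i j, |N i j| ≤ 1) (b : Fin (m + 1) → ℝ) (j : Fin (m + 1)) :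
    |(N.updateCol j b).det| ≤ (∑ i, |b i|) * (m : ℝ) ^ ((m : ℝ) / 2) := by
  rw [det_succ_column _ j, sum_mul]
  refine (abs_sum_le_sum_abs _ _).trans (sum_le_sum fun i _ => ?_)
  have hminor : (N.updateCol j b).submatrix i.succAbove j.succAbove =
      N.submatrix i.succAbove j.succAbove := by
    ext x y
    simp
  rw [abs_mul, abs_mul, hminor, updateCol_self, abs_pow, abs_neg, abs_one, one_pow, one_mul]
  gcongr
  exact abs_det_le_of_abs_le_one _ fun x y => hN _ _

theorem Matrix.abs_le_sum_abs_mulVec_mul {m : ℕ} (N : Matrix (Fin (m + 1)) (Fin (m + 1)) ℝ)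
    (hN : ∀ i j, ∃ z : ℤ, |z| ≤ 1 ∧ N i j = z) (hunit : IsUnit N) (x : Fin (m + 1) → ℝ)
    (i : Fin (m + 1)) : |x i| ≤ (∑ j, |(N *ᵥ x) j|) * (m : ℝ) ^ ((m : ℝ) / 2) := by
  have habs : ∀ i j, |N i j| ≤ 1 := fun i j => by
    obtain ⟨z, hz, hNz⟩ := hN i j
    rw [hNz]
    exact_mod_cast hz
  have hcramer : N.det • x = cramer N (N *ᵥ x) := by
    rw [cramer_eq_adjugate_mulVec, mulVec_mulVec, adjugate_mul, smul_mulVec, one_mulVec]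
  have hdet : 1 ≤ |N.det| :=
    one_le_abs_det_of_intCast N (fun i j => (hN i j).imp fun _ => And.right) hunit
  calc |x i| ≤ |N.det| * |x i| := le_mul_of_one_le_left (abs_nonneg _) hdet
    _ = |(N.updateCol i (N *ᵥ x)).det| := by
      rw [← abs_mul, ← cramer_apply, ← hcramer, Pi.smul_apply, smul_eq_mul]
    _ ≤ _ := abs_det_updateCol_le N habs _ i

theorem Matrix.exists_isUnit_submatrix_of_linearIndependent_rows {K ι : Type*} [Field K]
    [Fintype ι] {r : ℕ} (V : Matrix (Fin r) ι K) (hV : LinearIndependent K V.row) :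
    ∃ f : Fin r → ι, Function.Injective f ∧ IsUnit (Vᵀ.submatrix f id) := by
  have hspan : Submodule.span K (Set.range V.col) = ⊤ := by
    apply Submodule.eq_top_of_finrank_eq
    rw [← rank_eq_finrank_span_cols, hV.rank_matrix, Module.finrank_fin_fun, Fintype.card_fin]
  obtain ⟨κ, a, ha, hspan_a, hli⟩ := exists_linearIndependent' K V.col
  let b : Module.Basis κ K (Fin r → K) := .mk hli (by rw [hspan_a, hspan])
  let e : κ ≃ Fin r := b.indexEquiv (Pi.basisFun K (Fin r))
  refine ⟨a ∘ e.symm, ha.comp e.symm.injective, ?_⟩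
  rw [← linearIndependent_rows_iff_isUnit]
  exact hli.comp e.symm e.symm.injective

theorem Matrix.linearIndependent_rows_of_support_minimal {K ι κ : Type*} [Field K]
    [DecidableEq K] [Fintype ι] (V : Matrix ι κ K) (w : ι → K)
    (hmin : ∀ w' : ι → K, w' ᵥ* V = w ᵥ* V → #{a | w a ≠ 0} ≤ #{a | w' a ≠ 0}) :
    LinearIndependent K fun a : {a // w a ≠ 0} => V a := by
  classical
  by_contra hdep
  obtain ⟨g, hg, b, hb⟩ := Fintype.not_linearIndependent_iff.mp hdep
  let c : ι → K := fun a => if h : w a = 0 then 0 else g ⟨a, h⟩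
  have hc : c ᵥ* V = 0 := by
    rw [← hg]
    ext j
    simp only [vecMul, dotProduct, Finset.sum_apply, Pi.smul_apply, smul_eq_mul]
    refine sum_congr_set {a | w a ≠ 0} _ _ (fun a ha => ?_) fun a ha => ?_
    · simp [c, dif_neg (show ¬w a = 0 from ha)]
    · simp [c, show w a = 0 by simpa using ha]
  let w' := w - (w b / g b) • c
  have hw' : w' ᵥ* V = w ᵥ* V := by
    simp [w', sub_vecMul, smul_vecMul, hc]
  have hsupp : ({a | w' a ≠ 0} : Finset ι) ⊆ ({a | w a ≠ 0} : Finset ι).erase b := by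
    intro a ha
    simp only [mem_filter, mem_univ, true_and, mem_erase] at ha ⊢
    refine ⟨?_, fun h0 => ha ?_⟩
    · rintro rfl
      simp only [Pi.sub_apply, Pi.smul_apply, smul_eq_mul, w', c, dif_neg b.2] at ha
      exact ha (by rw [div_mul_cancel₀ _ hb, sub_self])
    · simp [w', c, h0]
  have := (hmin w' hw').trans (card_le_card hsupp)
  rw [card_erase_of_mem (by simpa using b.2)] at this
  have : 0 < #{a | w a ≠ 0} := card_pos.mpr ⟨b, by simpa using b.2⟩
  omega

theorem Matrix.abs_le_sum_abs_vecMul_mul {ι : Type*} [Fintype ι] {m : ℕ}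
    (V : Matrix (Fin (m + 1)) ι ℝ) (hV : LinearIndependent ℝ V.row)
    (hVint : ∀ a i, ∃ z : ℤ, |z| ≤ 1 ∧ V a i = z) (x : Fin (m + 1) → ℝ) (a : Fin (m + 1)) :
    |x a| ≤ (∑ i, |(x ᵥ* V) i|) * (m : ℝ) ^ ((m : ℝ) / 2) := by
  obtain ⟨f, hf, hunit⟩ := V.exists_isUnit_submatrix_of_linearIndependent_rows hV
  have hsub : ∀ c, (Vᵀ.submatrix f id *ᵥ x) c = (x ᵥ* V) (f c) := fun c => by
    simp [mulVec, vecMul, dotProduct, mul_comm]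
  calc |x a| ≤ (∑ c, |(Vᵀ.submatrix f id *ᵥ x) c|) * (m : ℝ) ^ ((m : ℝ) / 2) :=
        abs_le_sum_abs_mulVec_mul _ (fun c b => hVint b (f c)) hunit x a
    _ ≤ (∑ i, |(x ᵥ* V) i|) * (m : ℝ) ^ ((m : ℝ) / 2) := by
      classical
      gcongr
      simp only [hsub]
      rw [← sum_image (f := fun i => |(x ᵥ* V) i|) hf.injOn]
      exact sum_le_sum_of_subset_of_nonneg (subset_univ _) fun _ _ _ => abs_nonneg _

theorem Matrix.abs_le_of_linearIndependent_rows_support {ι κ : Type*} [Fintype ι] [Fintype κ]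
    {m : ℕ} (V : Matrix κ ι ℝ) (w : κ → ℝ) (hcard : #{a | w a ≠ 0} = m + 1)
    (hV : LinearIndependent ℝ fun a : {a // w a ≠ 0} => V a)
    (hVint : ∀ a i, ∃ z : ℤ, |z| ≤ 1 ∧ V a i = z) (a : κ) :
    |w a| ≤ (∑ i, |(w ᵥ* V) i|) * (m : ℝ) ^ ((m : ℝ) / 2) := by
  by_cases ha : w a = 0
  · rw [ha, abs_zero]
    positivity
  let e : Fin (m + 1) ≃ {a // w a ≠ 0} :=
    (Fintype.equivFinOfCardEq (by rwa [Fintype.card_subtype])).symm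
  have hvecMul : (fun c => w (e c)) ᵥ* V.submatrix (fun c => e c) id = w ᵥ* V := by
    ext i
    simp only [vecMul, dotProduct, submatrix_apply, id]
    rw [e.sum_comp (fun s : {a // w a ≠ 0} => w s * V s i)]
    exact (sum_congr_set {a | w a ≠ 0} _ _ (fun _ _ => rfl) fun b hb => by
      simp [show w b = 0 by simpa using hb]).symm
  have := abs_le_sum_abs_vecMul_mul (V.submatrix (fun c => e c) id) (hV.comp e e.injective)
    (fun c i => hVint _ i) (fun c => w (e c)) (e.symm ⟨a, ha⟩)
  simpa [hvecMul] using this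

theorem Matrix.transpose_mul_diagonal_mul_apply {R m n : Type*} [CommSemiring R] [Fintype m]
    [DecidableEq m] (P : Matrix m n R) (w : m → R) (i j : n) :
    (Pᵀ * diagonal w * P) i j = ∑ a, w a * (P a i * P a j) := by
  rw [mul_apply]
  simp only [mul_diagonal, transpose_apply]
  exact sum_congr rfl fun a _ => by ring

/-- Only the pairs `i < j` are kept, so that `∑ p, |(w ᵥ* pulseCouplings P) p|` is `Z`
rather than `2 Z`. -/
def pulseCouplings {k n : ℕ} (P : Matrix (Fin k) (Fin n) ℝ) :
    Matrix (Fin k) (Fin n × Fin n) ℝ :=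
  Matrix.of fun a p => if p.1 < p.2 then P a p.1 * P a p.2 else 0

section pulseCouplings

variable {k n : ℕ} (P : Matrix (Fin k) (Fin n) ℝ)

theorem vecMul_pulseCouplings_apply (w : Fin k → ℝ) (p : Fin n × Fin n) :
    (w ᵥ* pulseCouplings P) p = if p.1 < p.2 then (Pᵀ * diagonal w * P) p.1 p.2 else 0 := by
  rw [transpose_mul_diagonal_mul_apply]
  split_ifs <;> simp [vecMul, dotProduct, pulseCouplings, *]

theorem hadamard_Jmat_eq_of_vecMul_pulseCouplings_eq {w w' : Fin k → ℝ}
    (h : w ᵥ* pulseCouplings P = w' ᵥ* pulseCouplings P) :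
    (Pᵀ * diagonal w * P).hadamard (Jmat n) = (Pᵀ * diagonal w' * P).hadamard (Jmat n) := by
  ext i j
  simp only [hadamard_apply, Jmat]
  split_ifs with hij
  · simp
  rcases lt_or_gt_of_ne hij with hlt | hgt
  · simpa [vecMul_pulseCouplings_apply, hlt] using congrFun h (i, j)
  · have := congrFun h (j, i)
    simp only [vecMul_pulseCouplings_apply, hgt, if_true, transpose_mul_diagonal_mul_apply]
      at this ⊢
    simpa [mul_comm (P _ i)] using this

theorem pulseCouplings_eq_intCast (hP : ∀ a i, P a i = 1 ∨ P a i = -1) (a : Fin k)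
    (p : Fin n × Fin n) : ∃ z : ℤ, |z| ≤ 1 ∧ pulseCouplings P a p = z := by
  simp only [pulseCouplings, of_apply]
  split_ifs
  · refine ⟨if P a p.1 = P a p.2 then 1 else -1, by split_ifs <;> norm_num, ?_⟩
    rcases hP a p.1 with h1 | h1 <;> rcases hP a p.2 with h2 | h2 <;> norm_num [h1, h2]
  · exact ⟨0, by norm_num, by simp⟩

end pulseCouplings

theorem stmt_12_general (n k : ℕ)
    (A : Matrix (Fin n) (Fin n) ℝ)
    (Z : ℝ) (hZ : Z = ∑ i : Fin n, ∑ j : Fin n, if i < j then |A i j| else 0)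
    (P : Matrix (Fin k) (Fin n) ℝ) (hP : ∀ a i, P a i = 1 ∨ P a i = -1)
    (W : Matrix (Fin k) (Fin k) ℝ) (hWd : W.IsDiag)
    (hEq : (Pᵀ * W * P).hadamard (Jmat n) = A)
    (r : ℕ) (hr : r = (Finset.univ.filter fun a : Fin k => W a a ≠ 0).card)
    (hr1 : 1 < r)
    (hopt : ∀ k' : ℕ, 1 ≤ k' → ∀ P' : Matrix (Fin k') (Fin n) ℝ,
      (∀ a i, P' a i = 1 ∨ P' a i = -1) → ∀ W' : Matrix (Fin k') (Fin k') ℝ,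
      W'.IsDiag → (P'ᵀ * W' * P').hadamard (Jmat n) = A →
      r ≤ (Finset.univ.filter fun a : Fin k' => W' a a ≠ 0).card) :
    ∀ a : Fin k, |W a a| ≤ Z * ((r : ℝ) - 1) ^ (((r : ℝ) + 1) / 2) := by
  intro a
  obtain ⟨m, rfl⟩ : ∃ m, r = m + 1 := ⟨r - 1, by omega⟩
  rw [← hWd.diagonal_diag] at hEq
  have hupper : W.diag ᵥ* pulseCouplings P = fun p => if p.1 < p.2 then A p.1 p.2 else 0 := by
    ext p
    rw [vecMul_pulseCouplings_apply]
    split_ifs with hp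
    · simp [← hEq, Jmat, hp.ne]
    · rfl
  have hZ' : Z = ∑ p, |(W.diag ᵥ* pulseCouplings P) p| := by
    rw [hZ, hupper, Fintype.sum_prod_type]
    simp [apply_ite abs]
  have hLI := linearIndependent_rows_of_support_minimal (pulseCouplings P) W.diag fun w' hw' => by
    have := hopt k a.pos P hP (diagonal w') (isDiag_diagonal w')
      (by rw [hadamard_Jmat_eq_of_vecMul_pulseCouplings_eq P hw', hEq])
    show #{a | W a a ≠ 0} ≤ _
    rw [← hr]
    simpa using this
  have hZ0 : 0 ≤ Z := hZ' ▸ sum_nonneg fun _ _ => abs_nonneg _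
  calc |W a a| ≤ Z * (m : ℝ) ^ ((m : ℝ) / 2) := hZ' ▸
        abs_le_of_linearIndependent_rows_support _ _ hr.symm hLI (pulseCouplings_eq_intCast P hP) a
    _ ≤ Z * (((m + 1 : ℕ) : ℝ) - 1) ^ ((((m + 1 : ℕ) : ℝ) + 1) / 2) := by
      push_cast
      rw [add_sub_cancel_right]
      gcongr
      · exact_mod_cast (by omega : 1 ≤ m)
      · linarith

theorem stmt_12 (n k : ℕ) (hn : 1 ≤ n)
    (A : Matrix (Fin n) (Fin n) ℝ) (hAs : A.IsSymm) (hAd : ∀ i, A i i = 0)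
    (Z : ℝ) (hZ : Z = ∑ i : Fin n, ∑ j : Fin n, if i < j then |A i j| else 0)
    (P : Matrix (Fin k) (Fin n) ℝ) (hP : ∀ a i, P a i = 1 ∨ P a i = -1)
    (W : Matrix (Fin k) (Fin k) ℝ) (hWd : W.IsDiag)
    (hEq : (Pᵀ * W * P).hadamard (Jmat n) = A)
    (r : ℕ) (hr : r = (Finset.univ.filter fun a : Fin k => W a a ≠ 0).card)
    (hr1 : 1 < r)
    (hopt : ∀ k' : ℕ, 1 ≤ k' → ∀ P' : Matrix (Fin k') (Fin n) ℝ,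
      (∀ a i, P' a i = 1 ∨ P' a i = -1) → ∀ W' : Matrix (Fin k') (Fin k') ℝ,
      W'.IsDiag → (P'ᵀ * W' * P').hadamard (Jmat n) = A →
      r ≤ (Finset.univ.filter fun a : Fin k' => W' a a ≠ 0).card) :
    ∀ a : Fin k, |W a a| ≤ Z * ((r : ℝ) - 1) ^ (((r : ℝ) + 1) / 2) :=
  stmt_12_general n k A Z hZ P hP W hWd hEq r hr hr1 hopt
end

section
/- Let n ≥ 1 and let A ∈ ℝ^{n×n} be a symmetric {0,1}-valued matrix with zero diagonal. Suppose P ∈ {-1,1}^{k×n} and a diagonal matrix W ∈ ℝ^{k×k} satisfy PᵀWP ⊙ J = A, let r be the number of nonzero diagonal entries of W, and assume r > 1 and that W is L0-optimal: for every k' ≥ 1, every P' ∈ {-1,1}^{k'×n} and diagonal W' ∈ ℝ^{k'×k'} with P'ᵀW'P' ⊙ J = A, the number of nonzero diagonal entries of W' is at least r. Then every diagonal entry of W satisfies |W_{a,a}| ≤ r · (r − 1)^{(r+1)/2}. -/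
open Matrix

/-!
Write `v a` for the vector `(P a i * P a j * J i j)` indexed by pairs `(i, j)`, so that the
hypothesis reads `A = ∑ a, W a a • v a` over the support `S` of the diagonal of `W`. If the
`v a` with `a ∈ S` were linearly dependent, a multiple of the dependency could be subtracted
from the weights to kill one of them, contradicting L0-optimality. So they are independent, and
`r` of the coordinates `(i, j)` give a nonsingular `r × r` system `N w = b` with entries of `N`
in `{-1, 0, 1}` and `b ∈ {0, 1}^r`. By Cramer's rule `det N * w = adj N * b`, where
`|det N| ≥ 1` by integrality and, by Hadamard's inequality, every cofactor is at most
`(r - 1)^((r - 1) / 2)`. Hence `|w a| ≤ r (r - 1)^((r - 1) / 2) ≤ r (r - 1)^((r + 1) / 2)`.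
-/

open Finset

theorem Matrix.abs_det_le_prod_norm_row {m : ℕ} (B : Matrix (Fin m) (Fin m) ℝ) :
    |B.det| ≤ ∏ i, ‖WithLp.toLp 2 (B i)‖ := by
  have : Fact (Module.finrank ℝ (EuclideanSpace ℝ (Fin m)) = m) :=
    ⟨finrank_euclideanSpace_fin⟩
  let e := EuclideanSpace.basisFun (Fin m) ℝ
  have hdet : e.toBasis.det (fun i => WithLp.toLp 2 (B i)) = B.det := by
    rw [Module.Basis.det_apply, ← det_transpose]
    rfl
  rw [← hdet, ← e.toBasis.orientation.volumeForm_robust e rfl]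
  exact Orientation.abs_volumeForm_apply_le _ _

theorem Matrix.abs_det_le_sqrt_pow {m : ℕ} (B : Matrix (Fin m) (Fin m) ℝ)
    (hB : ∀ i j, |B i j| ≤ 1) : |B.det| ≤ √m ^ m := by
  have hrow : ∀ i, ‖WithLp.toLp 2 (B i)‖ ≤ √m := fun i => by
    rw [EuclideanSpace.norm_eq]
    gcongr
    calc ∑ j, ‖B i j‖ ^ 2 ≤ ∑ _j : Fin m, (1 : ℝ) := by
          gcongr with j
          rw [Real.norm_eq_abs, sq_le_one_iff_abs_le_one, abs_abs]
          exact hB i j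
      _ = m := by simp
  calc |B.det| ≤ ∏ i, ‖WithLp.toLp 2 (B i)‖ := B.abs_det_le_prod_norm_row
    _ ≤ ∏ _i : Fin m, √m := prod_le_prod (fun _ _ => norm_nonneg _) fun i _ => hrow i
    _ = √m ^ m := by simp

theorem Matrix.abs_adjugate_le {m : ℕ} (N : Matrix (Fin (m + 1)) (Fin (m + 1)) ℝ)
    (hN : ∀ i j, |N i j| ≤ 1) (i j : Fin (m + 1)) : |N.adjugate i j| ≤ √m ^ m := by
  rw [adjugate_fin_succ_eq_det_submatrix, abs_mul, abs_pow, abs_neg, abs_one, one_pow, one_mul]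
  exact abs_det_le_sqrt_pow _ fun _ _ => hN _ _

theorem Matrix.one_le_abs_det_of_mem_range_intCast {ι : Type*} [Fintype ι] [DecidableEq ι]
    (N : Matrix ι ι ℝ) (hN : ∀ i j, N i j ∈ Set.range ((↑) : ℤ → ℝ)) (hdet : N.det ≠ 0) :
    1 ≤ |N.det| := by
  choose Nz hNz using hN
  have hcast : N.det = ((Matrix.of Nz).det : ℝ) := by
    rw [Int.cast_det]
    congr with i j
    exact (hNz i j).symm
  rw [hcast] at hdet ⊢
  exact_mod_cast Int.one_le_abs (by exact_mod_cast hdet)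

theorem Matrix.exists_det_submatrix_ne_zero {K D ι : Type*} [Field K] [Fintype D] [Fintype ι]
    [DecidableEq ι] (M : Matrix D ι K) (hM : LinearIndependent K M.col) :
    ∃ φ : ι → D, (M.submatrix φ id).det ≠ 0 := by
  classical
  have hspan : Submodule.span K (Set.range M.row) = ⊤ := by
    apply Submodule.eq_top_of_finrank_eq
    rw [← rank_eq_finrank_span_row, ← rank_transpose, hM.rank_matrix,
      Module.finrank_fintype_fun_eq_card]
  obtain ⟨κ, a, ha, hspan', hli⟩ := exists_linearIndependent' K M.row
  have : Fintype κ := Fintype.ofInjective a ha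
  have hcard : Fintype.card κ = Fintype.card ι := by
    rw [linearIndependent_iff_card_eq_finrank_span.mp hli, Set.finrank, hspan', hspan,
      finrank_top, Module.finrank_fintype_fun_eq_card]
  let e := Fintype.equivOfCardEq hcard
  refine ⟨a ∘ e.symm, ?_⟩
  rw [← isUnit_iff_ne_zero, ← isUnit_iff_isUnit_det, ← linearIndependent_rows_iff_isUnit]
  exact hli.comp e.symm e.symm.injective

theorem Matrix.abs_le_of_mulVec_eq {m : ℕ} (N : Matrix (Fin (m + 1)) (Fin (m + 1)) ℝ)
    (hNint : ∀ i j, N i j ∈ Set.range ((↑) : ℤ → ℝ)) (hN : ∀ i j, |N i j| ≤ 1)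
    (hdet : N.det ≠ 0) {x y : Fin (m + 1) → ℝ} (hNx : N *ᵥ x = y) (hy : ∀ i, |y i| ≤ 1)
    (j : Fin (m + 1)) : |x j| ≤ (m + 1) * √m ^ m := by
  have hcramer : N.det * x j = ∑ i, N.adjugate j i * y i := by
    rw [← hNx, ← dotProduct, ← mulVec, mulVec_mulVec, adjugate_mul, smul_mulVec, one_mulVec,
      Pi.smul_apply, smul_eq_mul]
  calc |x j| ≤ |N.det| * |x j| :=
        le_mul_of_one_le_left (abs_nonneg _) (N.one_le_abs_det_of_mem_range_intCast hNint hdet)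
    _ = |∑ i, N.adjugate j i * y i| := by rw [← abs_mul, hcramer]
    _ ≤ ∑ i, |N.adjugate j i| * |y i| := by
      simpa only [abs_mul] using abs_sum_le_sum_abs (fun i => N.adjugate j i * y i) univ
    _ ≤ ∑ _i : Fin (m + 1), √m ^ m * 1 := by
      gcongr with i
      exacts [N.abs_adjugate_le hN j i, hy i]
    _ = (m + 1) * √m ^ m := by simp

theorem abs_coeff_le_of_linearIndependent {m : ℕ} {D : Type*} [Fintype D]
    {u : Fin (m + 1) → D → ℝ} (hu : LinearIndependent ℝ u)
    (huint : ∀ i p, u i p ∈ Set.range ((↑) : ℤ → ℝ)) (hu1 : ∀ i p, |u i p| ≤ 1)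
    {x : Fin (m + 1) → ℝ} {y : D → ℝ} (hxy : ∑ i, x i • u i = y) (hy : ∀ p, |y p| ≤ 1)
    (j : Fin (m + 1)) : |x j| ≤ (m + 1) * √m ^ m := by
  let M : Matrix D (Fin (m + 1)) ℝ := .of fun p i => u i p
  obtain ⟨φ, hφ⟩ := M.exists_det_submatrix_ne_zero hu
  refine (M.submatrix φ id).abs_le_of_mulVec_eq (fun _ _ => huint _ _) (fun _ _ => hu1 _ _) hφ
    (y := y ∘ φ) ?_ (fun _ => hy _) j
  ext b
  simp [M, mulVec, dotProduct, ← hxy, Finset.sum_apply, mul_comm]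

theorem abs_coeff_le_of_linearIndepOn_support {ι D : Type*} [Fintype ι] [Fintype D] {m : ℕ}
    {v : ι → D → ℝ} {w : ι → ℝ} (hv : LinearIndepOn ℝ v ↑({i | w i ≠ 0} : Finset ι))
    (hcard : #{i | w i ≠ 0} = m + 1) (hvint : ∀ i p, v i p ∈ Set.range ((↑) : ℤ → ℝ))
    (hv1 : ∀ i p, |v i p| ≤ 1) {y : D → ℝ} (hwy : ∑ i, w i • v i = y)
    (hy : ∀ p, |y p| ≤ 1) (i : ι) : |w i| ≤ (m + 1) * √m ^ m := by
  by_cases hi : w i = 0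
  · rw [hi, abs_zero]
    positivity
  have e : Fin (m + 1) ≃ (↑({i | w i ≠ 0} : Finset ι) : Set ι) :=
    (Fintype.equivFinOfCardEq (by simp only [Finset.coe_sort_coe, Fintype.card_coe, hcard])).symm
  have hbound := abs_coeff_le_of_linearIndependent (hv.comp e e.injective)
    (fun _ _ => hvint _ _) (fun _ _ => hv1 _ _) (x := fun j => w (e j)) ?_ hy
    (e.symm ⟨i, mem_filter.2 ⟨mem_univ i, hi⟩⟩)
  · rwa [e.apply_symm_apply] at hbound
  rw [← hwy, ← sum_filter_of_ne (p := fun j => w j ≠ 0)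
    fun j _ hj h0 => hj (by rw [h0, zero_smul])]
  exact (e.sum_comp fun j => w j • v j).trans (sum_finset_coe (fun j => w j • v j) _)

theorem linearIndepOn_support_of_minimal {ι K V : Type*} [Fintype ι] [DecidableEq ι] [Field K]
    [DecidableEq K] [AddCommGroup V] [Module K V] (v : ι → V) (w : ι → K)
    (hmin : ∀ w' : ι → K, ∑ i, w' i • v i = ∑ i, w i • v i →
      #{i | w i ≠ 0} ≤ #{i | w' i ≠ 0}) :
    LinearIndepOn K v ↑({i | w i ≠ 0} : Finset ι) := by
  set S : Finset ι := {i | w i ≠ 0}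
  rw [linearIndepOn_finset_iff]
  by_contra! h
  obtain ⟨f, hf, i₀, hi₀, hfi₀⟩ := h
  -- subtracting this multiple of the dependency `f` kills the weight at `i₀`
  let w' : ι → K := fun i => w i - w i₀ / f i₀ * if i ∈ S then f i else 0
  have hsum : ∑ i, w' i • v i = ∑ i, w i • v i := by
    simp [w', sub_smul, mul_smul, sum_sub_distrib, ← smul_sum, ite_smul, hf]
  have hsub : ({i | w' i ≠ 0} : Finset ι) ⊆ S := fun i => by
    by_cases hi : i ∈ S <;> simp_all [w', S]
  have hlt : #{i | w' i ≠ 0} < #S := by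
    refine card_lt_card ((ssubset_iff_of_subset hsub).2 ⟨i₀, hi₀, ?_⟩)
    simp [w', hi₀, hfi₀]
  exact (hmin w' hsum).not_gt hlt

theorem Real.sqrt_pow_le_rpow {x y : ℝ} (hx : 1 ≤ x) {m : ℕ} (hm : m ≤ 2 * y) :
    √x ^ m ≤ x ^ y := by
  rw [Real.sqrt_eq_rpow, ← Real.rpow_natCast, ← Real.rpow_mul (by linarith)]
  exact Real.rpow_le_rpow_of_exponent_le hx (by linarith)

def pulseVec {n k : ℕ} (P : Matrix (Fin k) (Fin n) ℝ) (a : Fin k) : Fin n × Fin n → ℝ :=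
  fun p => P a p.1 * P a p.2 * Jmat n p.1 p.2

section pulseVec

variable {n k : ℕ}

theorem uncurry_hadamard_jmat (P : Matrix (Fin k) (Fin n) ℝ) (w : Fin k → ℝ) :
    Function.uncurry ((Pᵀ * diagonal w * P).hadamard (Jmat n)) = ∑ a, w a • pulseVec P a := by
  ext p
  simp only [Function.uncurry, hadamard_apply, mul_apply, diagonal_apply, mul_ite,
    mul_zero, sum_ite_eq', mem_univ, if_true, transpose_apply, sum_mul,
    Finset.sum_apply, Pi.smul_apply, smul_eq_mul, pulseVec]
  exact sum_congr rfl fun a _ => by ring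

theorem pulseVec_mem_range_intCast {P : Matrix (Fin k) (Fin n) ℝ}
    (hP : ∀ a i, P a i = 1 ∨ P a i = -1) (a : Fin k) (p : Fin n × Fin n) :
    pulseVec P a p ∈ Set.range ((↑) : ℤ → ℝ) := by
  rcases hP a p.1 with h₁ | h₁ <;> rcases hP a p.2 with h₂ | h₂ <;>
    by_cases h : p.1 = p.2 <;> simp [pulseVec, Jmat, h₁, h₂, h] <;> exact ⟨-1, by norm_num⟩

theorem abs_pulseVec_le_one {P : Matrix (Fin k) (Fin n) ℝ}
    (hP : ∀ a i, P a i = 1 ∨ P a i = -1) (a : Fin k) (p : Fin n × Fin n) :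
    |pulseVec P a p| ≤ 1 := by
  rcases hP a p.1 with h₁ | h₁ <;> rcases hP a p.2 with h₂ | h₂ <;>
    by_cases h : p.1 = p.2 <;> simp [pulseVec, Jmat, h₁, h₂, h]

end pulseVec

theorem stmt_13_general (n k : ℕ)
    (A : Matrix (Fin n) (Fin n) ℝ)
    (h01 : ∀ i j : Fin n, A i j = 0 ∨ A i j = 1)
    (P : Matrix (Fin k) (Fin n) ℝ) (hP : ∀ a i, P a i = 1 ∨ P a i = -1)
    (W : Matrix (Fin k) (Fin k) ℝ) (hWd : W.IsDiag)
    (hEq : (Pᵀ * W * P).hadamard (Jmat n) = A)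
    (r : ℕ) (hr : r = (Finset.univ.filter fun a : Fin k => W a a ≠ 0).card)
    (hr1 : 1 < r)
    (hopt : ∀ k' : ℕ, 1 ≤ k' → ∀ P' : Matrix (Fin k') (Fin n) ℝ,
      (∀ a i, P' a i = 1 ∨ P' a i = -1) → ∀ W' : Matrix (Fin k') (Fin k') ℝ,
      W'.IsDiag → (P'ᵀ * W' * P').hadamard (Jmat n) = A →
      r ≤ (Finset.univ.filter fun a : Fin k' => W' a a ≠ 0).card) :
    ∀ a : Fin k, |W a a| ≤ (r : ℝ) * ((r : ℝ) - 1) ^ (((r : ℝ) + 1) / 2) := by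
  intro a
  rw [← hWd.diagonal_diag] at hEq
  have hA : Function.uncurry A = ∑ b, W.diag b • pulseVec P b := by
    rw [← hEq, uncurry_hadamard_jmat]
  have hind : LinearIndepOn ℝ (pulseVec P) ↑({b | W.diag b ≠ 0} : Finset (Fin k)) := by
    refine linearIndepOn_support_of_minimal _ _ fun w hw => ?_
    have hEq' : (Pᵀ * diagonal w * P).hadamard (Jmat n) = A := by
      ext i j
      exact congrFun (((uncurry_hadamard_jmat P w).trans hw).trans hA.symm) (i, j)
    have := hopt k a.pos P hP (diagonal w) (isDiag_diagonal w) hEq'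
    simp only [diagonal_apply_eq] at this
    rwa [hr] at this
  obtain ⟨m, rfl⟩ : ∃ m, r = m + 1 := ⟨r - 1, by omega⟩
  have hA1 : ∀ p, |Function.uncurry A p| ≤ 1 := fun p => by
    rcases h01 p.1 p.2 with h | h <;> simp [Function.uncurry, h]
  have hm : (1 : ℝ) ≤ m := by exact_mod_cast (by omega : 1 ≤ m)
  calc |W a a| ≤ (m + 1) * √m ^ m :=
        abs_coeff_le_of_linearIndepOn_support hind hr.symm (pulseVec_mem_range_intCast hP)
          (abs_pulseVec_le_one hP) hA.symm hA1 a
    _ ≤ _ := by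
      push_cast
      rw [add_sub_cancel_right]
      gcongr
      exact Real.sqrt_pow_le_rpow hm (by linarith)

theorem stmt_13 (n k : ℕ) (hn : 1 ≤ n)
    (A : Matrix (Fin n) (Fin n) ℝ) (hAs : A.IsSymm) (hAd : ∀ i, A i i = 0)
    (h01 : ∀ i j : Fin n, A i j = 0 ∨ A i j = 1)
    (P : Matrix (Fin k) (Fin n) ℝ) (hP : ∀ a i, P a i = 1 ∨ P a i = -1)
    (W : Matrix (Fin k) (Fin k) ℝ) (hWd : W.IsDiag)
    (hEq : (Pᵀ * W * P).hadamard (Jmat n) = A)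
    (r : ℕ) (hr : r = (Finset.univ.filter fun a : Fin k => W a a ≠ 0).card)
    (hr1 : 1 < r)
    (hopt : ∀ k' : ℕ, 1 ≤ k' → ∀ P' : Matrix (Fin k') (Fin n) ℝ,
      (∀ a i, P' a i = 1 ∨ P' a i = -1) → ∀ W' : Matrix (Fin k') (Fin k') ℝ,
      W'.IsDiag → (P'ᵀ * W' * P').hadamard (Jmat n) = A →
      r ≤ (Finset.univ.filter fun a : Fin k' => W' a a ≠ 0).card) :
    ∀ a : Fin k, |W a a| ≤ (r : ℝ) * ((r : ℝ) - 1) ^ (((r : ℝ) + 1) / 2) :=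
  stmt_13_general n k A h01 P hP W hWd hEq r hr hr1 hopt
end
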